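/- arXiv:1606.08872 — 2 statements merged into one kernel-verified Lean document; each statement's English description precedes it below -/
import Mathlib

section
/- Let 1 ≤ t ≤ r, let k_1, …, k_{t−1} be integers with 1 ≤ k_s ≤ s+1 for each 1 ≤ s ≤ t−1, and let 1 ≤ j ≤ t. Then the root π_{k_1} π_{k_2} ⋯ π_{k_{t−1}}(α_j + α_{j+1} + ⋯ + α_t) is a positive root (here α_j + ⋯ + α_t = e_j − e_{t+1}, each factor π_{k_s} is the cycle with ambient index s, and the empty product, when t = 1, is the identity). -/
open Equiv Finset

/-- The simple reflection `s i = (i, i+1)` (1-based) in `S_{r+1}`, for `1 ≤ i ≤ r`;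
the junk value `1` otherwise. -/
def sr (r i : ℕ) : Equiv.Perm (Fin (r + 1)) :=
  if h : 1 ≤ i ∧ i ≤ r then Equiv.swap ⟨i - 1, by omega⟩ ⟨i, by omega⟩ else 1

/-- The cycle `π_k` with ambient index `i`, i.e. `s_i s_{i-1} ⋯ s_k`
(the identity when `k = i + 1`). -/
def cyc (r i k : ℕ) : Equiv.Perm (Fin (r + 1)) :=
  ((List.range (i + 1 - k)).map fun t => sr r (i - t)).prod

/-- The product `π_{k i} π_{k (i+1)} ⋯ π_{k j}`, the factor `π_{k t}` being the
cycle with ambient index `t`. -/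
def cycProd (r : ℕ) (k : ℕ → ℕ) (i j : ℕ) : Equiv.Perm (Fin (r + 1)) :=
  ((List.range' i (j + 1 - i)).map fun t => cyc r t (k t)).prod

/-- Coxeter length of a permutation: the number of inversions. -/
def lenInv {n : ℕ} (w : Equiv.Perm (Fin n)) : ℕ :=
  (Finset.univ.filter fun p : Fin n × Fin n => p.1 < p.2 ∧ w p.2 < w p.1).card

/-- Partial sums of a (1-based) composition: `psum c j = c 1 + ⋯ + c j`. -/
def psum (c : ℕ → ℕ) (j : ℕ) : ℕ := ∑ i ∈ Finset.Icc 1 j, c i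

/-- The transpose partition of `(t 1, …, t b)`: `transp b t j = #{i ∈ [1,b] : t i ≥ j}`. -/
def transp (b : ℕ) (t : ℕ → ℕ) (j : ℕ) : ℕ :=
  ((Finset.Icc 1 b).filter fun i => j ≤ t i).card

/-- The element of `Fin (r+1)` with value `i` (for `i ≤ r`). -/
def finOf (r i : ℕ) : Fin (r + 1) := ⟨min i r, by omega⟩

/-- `w(α_i)` is a positive root, where `α_i = e_i − e_{i+1}` (1-based), i.e. the
0-based pair `(i-1, i)`; `w(e_c − e_d) = e_{w c} − e_{w d}` is positive iff `w c < w d`. -/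
def posRoot (r : ℕ) (w : Equiv.Perm (Fin (r + 1))) (i : ℕ) : Prop :=
  (w (finOf r (i - 1)) : ℕ) < w (finOf r i)

/-- `w(α_i)` is a negative root. -/
def negRoot (r : ℕ) (w : Equiv.Perm (Fin (r + 1))) (i : ℕ) : Prop :=
  (w (finOf r i) : ℕ) < w (finOf r (i - 1))

/-- `w(α_i)` is a simple root. -/
def simpleRoot (r : ℕ) (w : Equiv.Perm (Fin (r + 1))) (i : ℕ) : Prop :=
  (w (finOf r i) : ℕ) = (w (finOf r (i - 1)) : ℕ) + 1

/-- `w(α_i) = α_j` (as roots: the image pair is `(j-1, j)` in 0-based indices). -/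
def eqRoot (r : ℕ) (w : Equiv.Perm (Fin (r + 1))) (i j : ℕ) : Prop :=
  (w (finOf r (i - 1)) : ℕ) = j - 1 ∧ (w (finOf r i) : ℕ) = j

/-- `Π_l Π_{l+1} ⋯ Π_a` for the composition `c` and tuple `k`, where
`Π_j = π_{k_{x_{j-1}}} ⋯ π_{k_{x_j - 1}}` and `x_j = psum c j`. -/
def tailProd (r a : ℕ) (c k : ℕ → ℕ) (l : ℕ) : Equiv.Perm (Fin (r + 1)) :=
  ((List.range' l (a + 1 - l)).map fun j => cycProd r k (psum c (j - 1)) (psum c j - 1)).prod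

/-- The subgroup `W(P)`: generated by the simple reflections `s i` with `i ∈ [1,r]`
avoiding the partial sums `x 1, …, x (a-1)` of the composition `c`. -/
def WP (r a : ℕ) (c : ℕ → ℕ) : Subgroup (Equiv.Perm (Fin (r + 1))) :=
  Subgroup.closure
    {g | ∃ i, 1 ≤ i ∧ i ≤ r ∧ (∀ j, 1 ≤ j → j ≤ a - 1 → i ≠ psum c j) ∧ g = sr r i}

/-- `α_i ∈ Δ_λ` for the composition `λ = (p 1, …, p m)` of `r+1`. -/
def inDelta (r m : ℕ) (p : ℕ → ℕ) (i : ℕ) : Prop :=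
  1 ≤ i ∧ i ≤ r ∧ ∀ j, 1 ≤ j → j ≤ m - 1 → i ≠ psum p j

/-- The left coset `H · g`. -/
def cosetOf {G : Type*} [Group G] (H : Subgroup G) (g : G) : Set G :=
  {x | ∃ h ∈ H, x = h * g}

/-- The (0-based) positions `u` and `v` lie in the same block of the composition
`μ^⊤ = transp b t`; a negative root `e_c − e_d` lies in `Φ⁻_{μ^⊤}` iff its two
indices lie in the same block. -/
def sameBlock (b : ℕ) (t : ℕ → ℕ) (u v : ℕ) : Prop :=
  ∃ j, 1 ≤ j ∧ j ≤ t 1 ∧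
    psum (transp b t) (j - 1) ≤ u ∧ u < psum (transp b t) j ∧
    psum (transp b t) (j - 1) ≤ v ∧ v < psum (transp b t) j

/-!
Every simple reflection `s_i` with `i < t` fixes the (0-based) points `t, …, r`, hence so does
`w = π_{k_1} ⋯ π_{k_{t-1}}`. Being a bijection, `w` then maps `{0, …, t-1}` into itself, so
`w (j-1) < t = w t`.
-/

abbrev pointsFrom (r t : ℕ) : Set (Fin (r + 1)) := {x | t ≤ (x : ℕ)}

lemma Equiv.Perm.apply_notMem_of_mem_fixingSubgroup {α : Type*} {s : Set α} {σ : Perm α}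
    (hσ : σ ∈ fixingSubgroup (Perm α) s) {x : α} (hx : x ∉ s) : σ x ∉ s :=
  (SubMulAction.ofFixingSubgroup (Perm α) s).smul_mem (⟨σ, hσ⟩ : fixingSubgroup (Perm α) s) hx

lemma sr_mem_fixingSubgroup {r i t : ℕ} (hi : i < t) :
    sr r i ∈ fixingSubgroup (Perm (Fin (r + 1))) (pointsFrom r t) := by
  rw [mem_fixingSubgroup_iff]
  intro x (hx : t ≤ (x : ℕ))
  unfold sr
  split
  · exact swap_apply_of_ne_of_ne (Fin.ne_of_val_ne (by simp; omega))
      (Fin.ne_of_val_ne (by simp; omega))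
  · rfl

lemma cyc_mem_fixingSubgroup {r i k t : ℕ} (hi : i < t) :
    cyc r i k ∈ fixingSubgroup (Perm (Fin (r + 1))) (pointsFrom r t) := by
  refine list_prod_mem fun g hg => ?_
  obtain ⟨u, -, rfl⟩ := List.mem_map.mp hg
  exact sr_mem_fixingSubgroup (by omega)

lemma cycProd_mem_fixingSubgroup {r t j : ℕ} (k : ℕ → ℕ) (i : ℕ) (hj : j < t) :
    cycProd r k i j ∈ fixingSubgroup (Perm (Fin (r + 1))) (pointsFrom r t) := by
  refine list_prod_mem fun g hg => ?_
  obtain ⟨s, hs, rfl⟩ := List.mem_map.mp hg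
  exact cyc_mem_fixingSubgroup (by rw [List.mem_range'_1] at hs; omega)

/-- Encoding: `α_j + ⋯ + α_t = e_j − e_{t+1}` is the 0-based pair `(j-1, t)`. -/
theorem stmt2_general (r t j : ℕ) (ht1 : 1 ≤ t) (htr : t ≤ r) (hjt : j ≤ t)
    (k : ℕ → ℕ) :
    (cycProd r k 1 (t - 1) (finOf r (j - 1)) : ℕ) < cycProd r k 1 (t - 1) (finOf r t) := by
  have hw := cycProd_mem_fixingSubgroup (r := r) k 1 (Nat.sub_one_lt_of_lt ht1)
  have ht : (finOf r t : ℕ) = t := min_eq_left htr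
  have hj : (finOf r (j - 1) : ℕ) = j - 1 := min_eq_left (by omega)
  have hfix : cycProd r k 1 (t - 1) (finOf r t) = finOf r t :=
    (mem_fixingSubgroup_iff _).mp hw _ ht.ge
  rw [hfix]
  simpa [ht] using Perm.apply_notMem_of_mem_fixingSubgroup hw (x := finOf r (j - 1))
    (by simp [hj]; omega)

/-- `π_{k_1} ⋯ π_{k_{t-1}} (α_j + ⋯ + α_t)` is a positive root,
where `α_j + ⋯ + α_t = e_j − e_{t+1}` (1-based), i.e. the 0-based pair `(j-1, t)`. -/
theorem stmt2 (r t j : ℕ) (ht1 : 1 ≤ t) (htr : t ≤ r) (hj1 : 1 ≤ j) (hjt : j ≤ t)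
    (k : ℕ → ℕ) (hk : ∀ s, 1 ≤ s → s ≤ t - 1 → 1 ≤ k s ∧ k s ≤ s + 1) :
    (cycProd r k 1 (t - 1) (finOf r (j - 1)) : ℕ) < cycProd r k 1 (t - 1) (finOf r t) :=
  stmt2_general r t j ht1 htr hjt k
end

section
/- The map D_{(r_1⋯r_a)} → W(P)\S_{r+1} sending a tuple (k_{x_1}, …, k_r) to the left coset W(P) · (Π_2 Π_3 ⋯ Π_a) is a bijection between D_{(r_1⋯r_a)} and the set of left cosets of W(P) in S_{r+1}. -/
open Equiv Finset

/-!
`W(P)` is the stabiliser of the block-index map `q ↦ blockOf c a q` (it is generated by the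
neighbouring transpositions inside the blocks), so the coset `W(P) · w` is recorded by the map
`p ↦ blockOf c a (w p)`. Write `w = (Π_2 ⋯ Π_{a-1}) Π_a`. The first factor fixes the last block
`[x_{a-1}, x_a)` pointwise and preserves its complement, while `Π_a` moves exactly the positions
`k_i - 1` (`i` in the last block) into the last block. So the coset determines the set
`{k_i - 1}` of the last block, hence the increasing tuple `k` there, and every set of the right
size arises; removing the last block and inducting on the number of parts gives the bijection.
-/

lemma Equiv.Perm.list_prod_apply_eq_self {α : Type*} {l : List (Perm α)} {x : α}
    (h : ∀ σ ∈ l, σ x = x) : l.prod x = x := by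
  induction l with
  | nil => rfl
  | cons σ l ih => simp_all

lemma Equiv.Perm.val_apply_lt_of_forall_le {n m : ℕ} {σ : Perm (Fin n)}
    (hσ : ∀ q : Fin n, m ≤ q → σ q = q) {p : Fin n} (hp : (p : ℕ) < m) : (σ p : ℕ) < m := by
  by_contra h
  have := σ.injective (hσ (σ p) (not_lt.1 h))
  rw [this] at h
  omega

lemma Equiv.Perm.card_filter_lt_le_apply {n l : ℕ} (m : ℕ) (hl : l ≤ n) (g : Perm (Fin n))
    (hg : ∀ p : Fin n, (p : ℕ) < l ↔ (g p : ℕ) < l) :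
    #{p : Fin n | (p : ℕ) < l ∧ m ≤ g p} = l - m := by
  have himage : ({p : Fin n | (p : ℕ) < l ∧ m ≤ g p} : Finset _).map g.toEmbedding =
      (Finset.Ico m l).attachFin fun q hq => by rw [Finset.mem_Ico] at hq; omega := by
    ext q
    have := hg (g⁻¹ q)
    simp only [Perm.coe_inv, apply_symm_apply] at this
    simp only [Finset.mem_map_equiv, Finset.mem_filter_univ, Finset.mem_attachFin,
      Finset.mem_Ico, apply_symm_apply]
    omega
  rw [← Finset.card_map g.toEmbedding, himage, Finset.card_attachFin, Nat.card_Ico]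

open scoped Pointwise in
lemma cosetOf_eq_iff {G : Type*} [Group G] (H : Subgroup G) (g g' : G) :
    cosetOf H g = cosetOf H g' ↔ g * g'⁻¹ ∈ H := by
  have hright : ∀ x, cosetOf H x = MulOpposite.op x • (H : Set G) := fun x => by
    ext y
    rw [mem_rightCoset_iff]
    exact ⟨by rintro ⟨h, hh, rfl⟩; simpa using hh, fun hy => ⟨_, hy, by group⟩⟩
  rw [hright, hright, rightCoset_eq_iff, ← H.inv_mem_iff]
  simp

lemma StrictMonoOn.eqOn_of_image_eq {α β : Type*} [LinearOrder α] [WellFoundedLT α] [Preorder β]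
    {f g : α → β} {s : Set α} (hf : StrictMonoOn f s) (hg : StrictMonoOn g s)
    (h : f '' s = g '' s) : s.EqOn f g := by
  rw [Set.strictMonoOn_iff_strictMono] at hf hg
  have := (hf.range_inj hg).1 (by simpa only [Set.image_eq_range] using h)
  exact fun x hx => congrFun this ⟨x, hx⟩

lemma StrictMonoOn.add_le_nat_of_Icc {k : ℕ → ℕ} {a b : ℕ} (hk : StrictMonoOn k (Set.Icc a b))
    {i : ℕ} (hi : a ≤ i) (m : ℕ) (hm : i + m ≤ b) : m + k i ≤ k (i + m) := by
  induction m with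
  | zero => simp
  | succ m ih =>
    have := hk (a := i + m) ⟨by omega, by omega⟩ ⟨by omega, hm⟩ (by omega)
    have := ih (by omega)
    omega

lemma exists_strictMonoOn_image_eq (S : Finset ℕ) (i0 i1 : ℕ) (hS : #S = i1 + 1 - i0) :
    ∃ k : ℕ → ℕ, StrictMonoOn k (Set.Icc i0 i1) ∧ k '' Set.Icc i0 i1 = S := by
  have hfin : (Set.ofPred (· ∈ S)).Finite := S.finite_toSet
  have hcard : #hfin.toFinset = i1 + 1 - i0 := by
    rw [← hS]
    congr
    exact S.finite_toSet_toFinset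
  refine ⟨fun i => Nat.nth (· ∈ S) (i - i0), fun i ⟨hi0, hi1⟩ j ⟨hj0, hj1⟩ hij => ?_, ?_⟩
  · exact Nat.nth_strictMonoOn hfin (by simp only [Set.mem_Iio]; omega)
      (by simp only [Set.mem_Iio]; omega) (by omega)
  · ext m
    simp only [Set.mem_image, Set.mem_Icc, Finset.mem_coe]
    constructor
    · rintro ⟨i, ⟨hi0, hi1⟩, rfl⟩
      exact Nat.nth_mem_of_lt_card hfin (by omega)
    · intro hm
      obtain ⟨t, ht, rfl⟩ := Nat.exists_lt_card_finite_nth_eq hfin hm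
      exact ⟨i0 + t, ⟨by omega, by omega⟩, by simp⟩

section LevelSwaps

variable {n : ℕ} {β : Type*} {f : Fin n → β}

def levelSwaps (f : Fin n → β) : Set (Perm (Fin n)) :=
  {τ | ∃ p q : Fin n, (q : ℕ) = p + 1 ∧ f p = f q ∧ τ = swap p q}

lemma apply_mem_closure_levelSwaps {σ : Perm (Fin n)} (hσ : σ ∈ Subgroup.closure (levelSwaps f))
    (x : Fin n) : f (σ x) = f x := by
  induction hσ using Subgroup.closure_induction generalizing x with
  | mem τ hτ =>
    obtain ⟨p, q, -, hpq, rfl⟩ := hτ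
    rw [swap_apply_def]
    split_ifs with h1 h2
    · rw [h1, hpq]
    · rw [h2, hpq]
    · rfl
  | one => rfl
  | mul σ τ _ _ hσ hτ => rw [Perm.mul_apply, hσ, hτ]
  | inv σ _ hσ => simpa using (hσ (σ⁻¹ x)).symm

lemma swap_mem_closure_levelSwaps [PartialOrder β] (hf : Monotone f) {x y : Fin n}
    (hxy : f x = f y) : swap x y ∈ Subgroup.closure (levelSwaps f) := by
  wlog hle : x ≤ y generalizing x y
  · rw [swap_comm]
    exact this hxy.symm (le_of_not_ge hle)
  obtain ⟨d, hd⟩ := Nat.exists_eq_add_of_le (Fin.le_def.1 hle)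
  induction d generalizing y with
  | zero =>
    rw [show y = x from Fin.ext (by omega), swap_self, Perm.one_def.symm]
    exact Subgroup.one_mem _
  | succ d ih =>
    set z : Fin n := ⟨x + d, by omega⟩
    have hxz : f x = f z := le_antisymm (hf (Fin.le_def.2 (by simp [z])))
      (hxy ▸ hf (Fin.le_def.2 (by simp [z]; omega)))
    refine SubmonoidClass.swap_mem_trans _ (ih hxz (Fin.le_def.2 (by simp [z])) rfl) ?_
    exact Subgroup.subset_closure ⟨z, y, by simp [z]; omega, hxz.symm.trans hxy, rfl⟩

theorem mem_closure_levelSwaps_iff [PartialOrder β] (hf : Monotone f) {σ : Perm (Fin n)} :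
    σ ∈ Subgroup.closure (levelSwaps f) ↔ ∀ x, f (σ x) = f x := by
  refine ⟨apply_mem_closure_levelSwaps, fun h => ?_⟩
  have hswap : ∀ τ ∈ levelSwaps f, τ.IsSwap := by
    rintro _ ⟨p, q, hpq, -, rfl⟩
    exact ⟨p, q, fun h => by simp [h] at hpq, rfl⟩
  refine (mem_closure_isSwap hswap).2 ⟨Set.toFinite _, fun x => ?_⟩
  exact (swap_mem_closure_isSwap hswap).1 (swap_mem_closure_levelSwaps hf (h x))

end LevelSwaps

lemma sr_apply {r i : ℕ} (hi : 1 ≤ i) (hir : i ≤ r) (p : Fin (r + 1)) :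
    (sr r i p : ℕ) = if (p : ℕ) = i - 1 then i else if (p : ℕ) = i then i - 1 else p := by
  rw [sr, dif_pos ⟨hi, hir⟩, swap_apply_def]
  simp only [Fin.ext_iff]
  split_ifs <;> simp_all

lemma sr_apply_of_lt {r i : ℕ} {p : Fin (r + 1)} (hp : i < p) : sr r i p = p := by
  unfold sr
  split_ifs
  · exact swap_apply_of_ne_of_ne (by simp [Fin.ext_iff]; omega) (by simp [Fin.ext_iff]; omega)
  · rfl

lemma cyc_apply_of_lt {r i k : ℕ} {p : Fin (r + 1)} (hp : i < p) : cyc r i k p = p :=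
  Perm.list_prod_apply_eq_self <| by
    simp only [List.mem_map, List.mem_range]
    rintro _ ⟨t, -, rfl⟩
    exact sr_apply_of_lt (by omega)

-- `sr r 0` is the junk value `1`.
lemma cyc_zero (r k : ℕ) : cyc r 0 k = 1 :=
  List.prod_eq_one <| by
    simp only [List.mem_map, List.mem_range]
    rintro _ ⟨t, -, rfl⟩
    simp [sr]

lemma cyc_eq_sr_mul {r i k : ℕ} (hk : 1 ≤ k) (hki : k ≤ i) :
    cyc r i k = sr r i * cyc r (i - 1) k := by
  rw [cyc, cyc, show i + 1 - k = i - 1 + 1 - k + 1 by omega, List.range_succ_eq_map]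
  simp only [List.map_cons, List.prod_cons, Nat.sub_zero, List.map_map]
  congr 3
  funext t
  simp only [Function.comp_apply]
  congr 1
  omega

lemma cyc_apply {r i k : ℕ} (hk : 1 ≤ k) (hki : k ≤ i + 1) (hir : i ≤ r) (p : Fin (r + 1)) :
    (cyc r i k p : ℕ) = if (p : ℕ) + 1 = k then i else if k ≤ p ∧ p ≤ i then p - 1 else p := by
  induction i with
  | zero =>
    obtain rfl : k = 1 := by omega
    simp only [cyc, tsub_self, List.range_zero, List.map_nil, List.prod_nil, Perm.one_apply]
    split_ifs <;> omega
  | succ i ih =>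
    rcases Nat.lt_or_ge (i + 1) k with hlt | hle
    · rw [cyc, show i + 1 + 1 - k = 0 by omega]
      simp only [List.range_zero, List.map_nil, List.prod_nil, Perm.one_apply]
      split_ifs <;> omega
    · rw [cyc_eq_sr_mul hk hle, Perm.mul_apply, sr_apply (by omega) hir, Nat.add_sub_cancel,
        ih (by omega) (by omega)]
      have := p.isLt
      split_ifs <;> omega

lemma cycProd_zero (r : ℕ) (k : ℕ → ℕ) (i : ℕ) : cycProd r k i 0 = 1 := by
  rcases Nat.eq_zero_or_pos i with rfl | hi
  · simp [cycProd, cyc_zero]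
  · simp [cycProd, show 1 - i = 0 by omega]

lemma cycProd_of_lt (r : ℕ) (k : ℕ → ℕ) {i j : ℕ} (h : j < i) : cycProd r k i j = 1 := by
  simp [cycProd, show j + 1 - i = 0 by omega]

lemma cycProd_succ (r : ℕ) (k : ℕ → ℕ) {i j : ℕ} (h : i ≤ j + 1) :
    cycProd r k i (j + 1) = cycProd r k i j * cyc r (j + 1) (k (j + 1)) := by
  rw [cycProd, cycProd, show j + 1 + 1 - i = j + 1 - i + 1 by omega, List.range'_1_concat,
    List.map_append, List.prod_append, show i + (j + 1 - i) = j + 1 by omega]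
  simp

lemma cycProd_apply_of_lt (r : ℕ) (k : ℕ → ℕ) (i : ℕ) {j : ℕ} {p : Fin (r + 1)} (hp : j < p) :
    cycProd r k i j p = p :=
  Perm.list_prod_apply_eq_self <| by
    simp only [List.mem_map, List.mem_range'_1]
    rintro _ ⟨t, ht, rfl⟩
    exact cyc_apply_of_lt (by omega)

lemma cycProd_congr (r : ℕ) {k k' : ℕ → ℕ} {i j : ℕ} (h : Set.EqOn k k' (Set.Icc i j)) :
    cycProd r k i j = cycProd r k' i j := by
  rw [cycProd, cycProd]
  congr 1
  refine List.map_congr_left fun t ht => ?_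
  rw [List.mem_range'_1] at ht
  rw [h ⟨by omega, by omega⟩]

/-- One block `(k_{i0}, …, k_{i1})` of a tuple in `D_{(r_1⋯r_a)}`. -/
def IsBlockTuple (k : ℕ → ℕ) (i0 i1 : ℕ) : Prop :=
  (∀ i ∈ Set.Icc i0 i1, 1 ≤ k i ∧ k i ≤ i + 1) ∧ StrictMonoOn k (Set.Icc i0 i1)

lemma IsBlockTuple.mono {k : ℕ → ℕ} {i0 i1 j1 : ℕ} (hk : IsBlockTuple k i0 i1) (hj : j1 ≤ i1) :
    IsBlockTuple k i0 j1 :=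
  ⟨fun i hi => hk.1 i ⟨hi.1, hi.2.trans hj⟩, hk.2.mono (Set.Icc_subset_Icc le_rfl hj)⟩

lemma IsBlockTuple.congr {k k' : ℕ → ℕ} {i0 i1 : ℕ} (hk : IsBlockTuple k i0 i1)
    (h : Set.EqOn k k' (Set.Icc i0 i1)) : IsBlockTuple k' i0 i1 :=
  ⟨fun i hi => h hi ▸ hk.1 i hi, hk.2.congr h⟩

lemma le_cycProd_apply_iff {r i0 i1 : ℕ} {k : ℕ → ℕ} (hir : i1 ≤ r)
    (hk : IsBlockTuple k i0 i1) {p : Fin (r + 1)} (hp : (p : ℕ) ≤ i1) :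
    i0 ≤ (cycProd r k i0 i1 p : ℕ) ↔ (p : ℕ) + 1 ∈ k '' Set.Icc i0 i1 := by
  induction i1 generalizing p with
  | zero =>
    rw [cycProd_zero, Perm.one_apply]
    constructor
    · intro h
      exact ⟨0, ⟨by omega, le_rfl⟩, by have := hk.1 0 ⟨by omega, le_rfl⟩; omega⟩
    · rintro ⟨i, hi, -⟩
      exact hi.1.trans (hi.2.trans (Nat.zero_le _))
  | succ i1 ih =>
    rcases Nat.lt_or_ge (i1 + 1) i0 with hlt | hle
    · rw [cycProd_of_lt r k hlt, Set.Icc_eq_empty (by omega)]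
      simp only [Perm.one_apply, Set.image_empty, Set.mem_empty_iff_false, iff_false]
      omega
    have hK := hk.1 (i1 + 1) ⟨hle, le_rfl⟩
    have hlast : ∀ i ∈ Set.Icc i0 i1, k i < k (i1 + 1) := fun i hi =>
      hk.2 ⟨hi.1, hi.2.trans (Nat.le_succ _)⟩ ⟨hle, le_rfl⟩ (by have := hi.2; omega)
    have ih' := fun {q : Fin (r + 1)} (hq : (q : ℕ) ≤ i1) =>
      ih (by omega) (hk.mono (Nat.le_succ _)) hq
    have hcyc := cyc_apply hK.1 hK.2 hir p
    rw [cycProd_succ r k hle, Perm.mul_apply, ← Set.insert_Icc_right_eq_Icc_add_one hle,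
      Set.image_insert_eq, Set.mem_insert_iff]
    split_ifs at hcyc with h1 h2
    · rw [cycProd_apply_of_lt r k i0 (p := cyc r (i1 + 1) (k (i1 + 1)) p) (by omega), hcyc]
      exact iff_of_true hle (Or.inl h1)
    · rw [ih' (by omega), hcyc, show (p : ℕ) - 1 + 1 = p by omega]
      refine iff_of_false (fun ⟨i, hi, hki⟩ => ?_) (fun h => ?_)
      · have := hlast i hi
        omega
      · obtain h | ⟨i, hi, hki⟩ := h
        · omega
        · have := hlast i hi
          omega
    · rw [show cyc r (i1 + 1) (k (i1 + 1)) p = p from Fin.ext hcyc, ih' (by omega)]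
      exact (or_iff_right h1).symm

lemma IsBlockTuple.eqOn_of_le_cycProd_apply_iff {r i0 i1 : ℕ} {k k' : ℕ → ℕ} (hir : i1 ≤ r)
    (hk : IsBlockTuple k i0 i1) (hk' : IsBlockTuple k' i0 i1)
    (h : ∀ p : Fin (r + 1), (p : ℕ) ≤ i1 →
      (i0 ≤ (cycProd r k i0 i1 p : ℕ) ↔ i0 ≤ (cycProd r k' i0 i1 p : ℕ))) :
    Set.EqOn k k' (Set.Icc i0 i1) := by
  refine hk.2.eqOn_of_image_eq hk'.2 (Set.ext fun m => ?_)
  by_cases hm : 1 ≤ m ∧ m ≤ i1 + 1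
  · have hp := h ⟨m - 1, by omega⟩ (by simp; omega)
    rwa [le_cycProd_apply_iff hir hk (by simp; omega),
      le_cycProd_apply_iff hir hk' (by simp; omega), Fin.val_mk, Nat.sub_add_cancel hm.1] at hp
  · refine iff_of_false ?_ ?_ <;> rintro ⟨i, hi, rfl⟩
    · have := hk.1 i hi; have := hi.2; omega
    · have := hk'.1 i hi; have := hi.2; omega

lemma exists_isBlockTuple_le_cycProd_apply_iff {r i0 i1 : ℕ} (hir : i1 ≤ r)
    (T : Finset (Fin (r + 1))) (hT : ∀ p ∈ T, (p : ℕ) ≤ i1) (hcard : #T = i1 + 1 - i0) :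
    ∃ k, IsBlockTuple k i0 i1 ∧
      ∀ p : Fin (r + 1), (p : ℕ) ≤ i1 → (i0 ≤ (cycProd r k i0 i1 p : ℕ) ↔ p ∈ T) := by
  set S := T.image fun p : Fin (r + 1) => (p : ℕ) + 1
  have hS : ∀ p : Fin (r + 1), (p : ℕ) + 1 ∈ S ↔ p ∈ T := fun p => by
    simp only [S, Finset.mem_image, add_left_inj, ← Fin.ext_iff, exists_eq_right]
  have hS1 : ∀ m ∈ S, 1 ≤ m ∧ m ≤ i1 + 1 := by
    simp only [S, Finset.mem_image]
    rintro _ ⟨p, hp, rfl⟩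
    have := hT p hp
    omega
  obtain ⟨k, hmono, himg⟩ := exists_strictMonoOn_image_eq S i0 i1
    (by rwa [Finset.card_image_of_injective _ fun p q h => Fin.ext (by simpa using h)])
  have hmem : ∀ i ∈ Set.Icc i0 i1, k i ∈ S := fun i hi => by
    rw [← Finset.mem_coe, ← himg]
    exact Set.mem_image_of_mem k hi
  have hk : IsBlockTuple k i0 i1 := by
    refine ⟨fun i hi => ⟨(hS1 _ (hmem i hi)).1, ?_⟩, hmono⟩
    have := hmono.add_le_nat_of_Icc hi.1 (i1 - i) (by have := hi.2; omega)
    have := hS1 _ (hmem i1 ⟨hi.1.trans hi.2, le_rfl⟩)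
    rw [Nat.add_sub_cancel' hi.2] at *
    omega
  refine ⟨k, hk, fun p hp => ?_⟩
  rw [le_cycProd_apply_iff hir hk hp, himg, Finset.mem_coe, hS]

lemma psum_mono (c : ℕ → ℕ) : Monotone (psum c) := fun _ _ h =>
  Finset.sum_le_sum_of_subset (Finset.Icc_subset_Icc_right h)

/-- The 0-based index of the block, among the first `a` parts of `c`, containing the 0-based
position `q`. -/
def blockOf (c : ℕ → ℕ) (a q : ℕ) : ℕ := #{j ∈ Finset.Ico 1 a | psum c j ≤ q}

lemma blockOf_mono (c : ℕ → ℕ) (a : ℕ) : Monotone (blockOf c a) := fun _ _ h =>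
  Finset.card_le_card (Finset.monotone_filter_right _ fun _ _ hj => hj.trans h)

lemma blockOf_lt (c : ℕ → ℕ) {a : ℕ} (ha : 1 ≤ a) (q : ℕ) : blockOf c a q < a :=
  (Finset.card_filter_le _ _).trans_lt (by simp; omega)

lemma blockOf_succ (c : ℕ → ℕ) (n q : ℕ) :
    blockOf c (n + 1) q = if psum c n ≤ q then n else blockOf c n q := by
  split_ifs with h
  · rw [blockOf, Finset.filter_true_of_mem fun j hj => (psum_mono c (by simp at hj; omega)).trans h]
    simp
  · rcases Nat.eq_zero_or_pos n with rfl | hn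
    · simp [psum] at h
    rw [blockOf, blockOf, Nat.Ico_succ_right_eq_insert_Ico (by omega), Finset.filter_insert,
      if_neg h]

lemma blockOf_sub_one_eq_iff (c : ℕ → ℕ) (a : ℕ) {i : ℕ} (hi : 1 ≤ i) :
    blockOf c a (i - 1) = blockOf c a i ↔ ∀ j, 1 ≤ j → j ≤ a - 1 → i ≠ psum c j := by
  constructor
  · rintro h j hj1 hja rfl
    refine (Finset.card_lt_card ?_).ne h
    refine Finset.ssubset_iff_subset_ne.2 ⟨Finset.monotone_filter_right _ fun _ _ h => h.trans
      (Nat.sub_le _ _), fun heq => ?_⟩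
    have := Finset.ext_iff.1 heq j
    simp at this
    omega
  · intro h
    refine congrArg Finset.card (Finset.filter_congr fun j hj => ?_)
    have := h j (by simp at hj; omega) (by simp at hj; omega)
    omega

lemma mem_WP_iff {r a : ℕ} {c : ℕ → ℕ} {σ : Perm (Fin (r + 1))} :
    σ ∈ WP r a c ↔ ∀ p, blockOf c a (σ p) = blockOf c a p := by
  have hgen : {g | ∃ i, 1 ≤ i ∧ i ≤ r ∧ (∀ j, 1 ≤ j → j ≤ a - 1 → i ≠ psum c j) ∧ g = sr r i} =
      levelSwaps (fun p : Fin (r + 1) => blockOf c a p) := by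
    ext g
    constructor
    · rintro ⟨i, hi1, hir, hi, rfl⟩
      refine ⟨⟨i - 1, by omega⟩, ⟨i, by omega⟩, by simp; omega,
        (blockOf_sub_one_eq_iff c a hi1).2 hi, by rw [sr, dif_pos ⟨hi1, hir⟩]⟩
    · rintro ⟨p, q, hpq, hbl, rfl⟩
      refine ⟨q, by omega, by omega, (blockOf_sub_one_eq_iff c a (by omega)).1 (by
        rwa [show (q : ℕ) - 1 = p by omega]), ?_⟩
      rw [sr, dif_pos ⟨by omega, by omega⟩]
      congr
      ext
      simp
      omega
  rw [WP, hgen, mem_closure_levelSwaps_iff fun _ _ h => blockOf_mono c a h]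

lemma cosetOf_WP_eq_iff {r a : ℕ} {c : ℕ → ℕ} (g g' : Perm (Fin (r + 1))) :
    cosetOf (WP r a c) g = cosetOf (WP r a c) g' ↔
      ∀ p, blockOf c a (g p) = blockOf c a (g' p) := by
  rw [cosetOf_eq_iff, mem_WP_iff]
  refine ⟨fun h p => by simpa using h (g' p), fun h p => by simpa using h (g'⁻¹ p)⟩

lemma tailProd_succ (r : ℕ) (c k : ℕ → ℕ) {n : ℕ} (hn : 1 ≤ n) :
    tailProd r (n + 1) c k 2 =
      tailProd r n c k 2 * cycProd r k (psum c n) (psum c (n + 1) - 1) := by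
  rw [tailProd, tailProd, show n + 1 + 1 - 2 = n + 1 - 2 + 1 by omega, List.range'_1_concat,
    List.map_append, List.prod_append, show 2 + (n + 1 - 2) = n + 1 by omega]
  simp

lemma tailProd_apply_of_le (r : ℕ) {c : ℕ → ℕ} (hc1 : 1 ≤ psum c 1) (k : ℕ → ℕ) (a : ℕ)
    {p : Fin (r + 1)} (hp : psum c a ≤ p) : tailProd r a c k 2 p = p :=
  Perm.list_prod_apply_eq_self <| by
    simp only [List.mem_map, List.mem_range'_1]
    rintro _ ⟨j, hj, rfl⟩
    have := psum_mono c (show 1 ≤ j by omega)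
    have := psum_mono c (show j ≤ a by omega)
    exact cycProd_apply_of_lt r k _ (by omega)

lemma tailProd_congr (r a : ℕ) (c : ℕ → ℕ) {k k' : ℕ → ℕ}
    (h : Set.EqOn k k' (Set.Icc (psum c 1) (psum c a - 1))) :
    tailProd r a c k 2 = tailProd r a c k' 2 := by
  rw [tailProd, tailProd]
  congr 1
  refine List.map_congr_left fun j hj => cycProd_congr r fun t ht => h ⟨?_, ?_⟩
  all_goals
    rw [List.mem_range'_1] at hj
    have := psum_mono c (show 1 ≤ j - 1 by omega)
    have := psum_mono c (show j ≤ a by omega)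
    have := ht.1
    have := ht.2
    omega

-- `Π_2 ⋯ Π_n` fixes every position `≥ x_n`, so only the last factor decides whether a position
-- lands in the last block.
lemma blockOf_tailProd_succ (r : ℕ) {c : ℕ → ℕ} (hc1 : 1 ≤ psum c 1) (k : ℕ → ℕ) {n : ℕ}
    (hn : 1 ≤ n) (p : Fin (r + 1)) :
    blockOf c (n + 1) (tailProd r (n + 1) c k 2 p) =
      if psum c n ≤ cycProd r k (psum c n) (psum c (n + 1) - 1) p then n
      else blockOf c n (tailProd r n c k 2 (cycProd r k (psum c n) (psum c (n + 1) - 1) p)) := by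
  rw [tailProd_succ r c k hn, Perm.mul_apply, blockOf_succ]
  set q := cycProd r k (psum c n) (psum c (n + 1) - 1) p
  by_cases hq : psum c n ≤ q
  · simp only [tailProd_apply_of_le r hc1 k n hq, if_pos hq]
  · rw [if_neg hq, if_neg (not_le.2 (Perm.val_apply_lt_of_forall_le
      (fun _ => tailProd_apply_of_le r hc1 k n) (not_le.1 hq)))]

/-- Conditions (a) and (b) of `D_{(r_1⋯r_a)}` for the first `a` parts of `c`. -/
def IsAdmissible (c : ℕ → ℕ) (a : ℕ) (k : ℕ → ℕ) : Prop :=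
  (∀ i, psum c 1 ≤ i → i ≤ psum c a - 1 → 1 ≤ k i ∧ k i ≤ i + 1) ∧
    ∀ j, 2 ≤ j → j ≤ a → ∀ i, psum c (j - 1) ≤ i → i + 1 ≤ psum c j - 1 → k i < k (i + 1)

lemma IsAdmissible.congr {c : ℕ → ℕ} {a : ℕ} {k k' : ℕ → ℕ} (hk : IsAdmissible c a k)
    (h : Set.EqOn k k' (Set.Icc (psum c 1) (psum c a - 1))) : IsAdmissible c a k' := by
  refine ⟨fun i h1 h2 => h ⟨h1, h2⟩ ▸ hk.1 i h1 h2, fun j hj2 hja i h1 h2 => ?_⟩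
  have := psum_mono c (show 1 ≤ j - 1 by omega)
  have := psum_mono c hja
  rw [← h ⟨by omega, by omega⟩, ← h ⟨by omega, by omega⟩]
  exact hk.2 j hj2 hja i h1 h2

lemma isAdmissible_succ_iff {c : ℕ → ℕ} (hc1 : 1 ≤ psum c 1) {n : ℕ} (hn : 1 ≤ n)
    {k : ℕ → ℕ} :
    IsAdmissible c (n + 1) k ↔
      IsAdmissible c n k ∧ IsBlockTuple k (psum c n) (psum c (n + 1) - 1) := by
  have h1n := psum_mono c hn
  have hnn := psum_mono c (show n ≤ n + 1 by omega)
  constructor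
  · rintro ⟨hb, hm⟩
    refine ⟨⟨fun i h1 h2 => hb i h1 (by omega), fun j h2 hj => hm j h2 (by omega)⟩,
      fun i hi => hb i (h1n.trans hi.1) hi.2, ?_⟩
    refine strictMonoOn_of_lt_add_one Set.ordConnected_Icc fun i _ hi hi' => ?_
    exact hm (n + 1) (by omega) le_rfl i hi.1 hi'.2
  · rintro ⟨⟨hb, hm⟩, htb, htm⟩
    refine ⟨fun i h1 h2 => ?_, fun j h2 hj i h1 h2' => ?_⟩
    · by_cases hi : i < psum c n
      · exact hb i h1 (by omega)
      · exact htb i ⟨by omega, h2⟩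
    · obtain hj' | rfl : j < n + 1 ∨ j = n + 1 := by omega
      · exact hm j h2 (by omega) i h1 h2'
      · rw [Nat.add_sub_cancel] at h1
        exact htm ⟨h1, by omega⟩ ⟨by omega, h2'⟩ (Nat.lt_succ_self i)

theorem IsAdmissible.eqOn_of_blockOf_tailProd_eq {r a : ℕ} (ha : 1 ≤ a) {c : ℕ → ℕ}
    (hc1 : 1 ≤ psum c 1) (hca : psum c a ≤ r + 1) {k k' : ℕ → ℕ} (hk : IsAdmissible c a k)
    (hk' : IsAdmissible c a k')
    (h : ∀ p, blockOf c a (tailProd r a c k 2 p) = blockOf c a (tailProd r a c k' 2 p)) :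
    Set.EqOn k k' (Set.Icc (psum c 1) (psum c a - 1)) := by
  induction a, ha using Nat.le_induction generalizing k k' with
  | base => intro i hi; have := hi.1; have := hi.2; omega
  | succ n hn ih =>
    have hnn := psum_mono c (show n ≤ n + 1 by omega)
    obtain ⟨hkn, hkt⟩ := (isAdmissible_succ_iff hc1 hn).1 hk
    obtain ⟨hk'n, hk't⟩ := (isAdmissible_succ_iff hc1 hn).1 hk'
    have htop : ∀ p : Fin (r + 1),
        (psum c n ≤ (cycProd r k (psum c n) (psum c (n + 1) - 1) p : ℕ) ↔
          psum c n ≤ (cycProd r k' (psum c n) (psum c (n + 1) - 1) p : ℕ)) := by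
      intro p
      have hp := h p
      rw [blockOf_tailProd_succ r hc1 k hn, blockOf_tailProd_succ r hc1 k' hn] at hp
      have := blockOf_lt c hn
      split_ifs at hp <;> grind
    have heqt := hkt.eqOn_of_le_cycProd_apply_iff (by omega) hk't fun p _ => htop p
    have hv := cycProd_congr r heqt
    have heqn := ih (by omega) hkn hk'n fun q => by
      by_cases hq : psum c n ≤ q
      · rw [tailProd_apply_of_le r hc1 k n hq, tailProd_apply_of_le r hc1 k' n hq]
      · have hp := h ((cycProd r k (psum c n) (psum c (n + 1) - 1))⁻¹ q)
        rwa [blockOf_tailProd_succ r hc1 k hn, blockOf_tailProd_succ r hc1 k' hn, ← hv,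
          ← Perm.mul_apply, mul_inv_cancel, Perm.one_apply, if_neg hq, if_neg hq] at hp
    intro i hi
    by_cases hin : i < psum c n
    · exact heqn ⟨hi.1, by omega⟩
    · exact heqt ⟨by omega, hi.2⟩

theorem exists_isAdmissible_blockOf_tailProd_eq {r a : ℕ} (ha : 1 ≤ a) {c : ℕ → ℕ}
    (hc1 : 1 ≤ psum c 1) (hca : psum c a ≤ r + 1) (g : Perm (Fin (r + 1)))
    (hg : ∀ p : Fin (r + 1), (p : ℕ) < psum c a ↔ (g p : ℕ) < psum c a) :
    ∃ k, IsAdmissible c a k ∧ ∀ p, blockOf c a (tailProd r a c k 2 p) = blockOf c a (g p) := by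
  induction a, ha using Nat.le_induction generalizing g with
  | base =>
    refine ⟨0, ⟨fun i h1 h2 => by omega, fun j h2 hj => by omega⟩, fun p => ?_⟩
    simp [blockOf]
  | succ n hn ih =>
    have hnn := psum_mono c (show n ≤ n + 1 by omega)
    have h1n := psum_mono c hn
    set T : Finset (Fin (r + 1)) := {p | (p : ℕ) < psum c (n + 1) ∧ psum c n ≤ g p}
    obtain ⟨kt, hkt, hv⟩ := exists_isBlockTuple_le_cycProd_apply_iff (i0 := psum c n)
      (i1 := psum c (n + 1) - 1) (by omega) T
      (fun p hp => by have := (Finset.mem_filter.1 hp).2.1; omega)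
      (by rw [Perm.card_filter_lt_le_apply (psum c n) hca g hg]; omega)
    set v := cycProd r kt (psum c n) (psum c (n + 1) - 1)
    have hvg : ∀ p, psum c n ≤ (v p : ℕ) ↔ psum c n ≤ (g p : ℕ) := fun p => by
      by_cases hp : (p : ℕ) < psum c (n + 1)
      · simpa [T, hp] using hv p (by omega)
      · rw [cycProd_apply_of_lt r kt _ (by omega)]
        have := (hg p).not.1 hp
        omega
    obtain ⟨k', hk', hk'g⟩ := ih (by omega) (g * v⁻¹) fun q => by
      have := hvg (v⁻¹ q)
      simp only [Perm.mul_apply, ← Perm.mul_apply v, mul_inv_cancel, Perm.one_apply] at this ⊢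
      omega
    set k := fun i => if i < psum c n then k' i else kt i
    have hkk' : Set.EqOn k k' (Set.Icc (psum c 1) (psum c n - 1)) := fun i hi => by
      simp only [k, if_pos (show i < psum c n by have := hi.2; omega)]
    have hkkt : Set.EqOn kt k (Set.Icc (psum c n) (psum c (n + 1) - 1)) := fun i hi => by
      simp only [k, if_neg (not_lt.2 hi.1)]
    refine ⟨k, (isAdmissible_succ_iff hc1 hn).2 ⟨hk'.congr hkk'.symm, hkt.congr hkkt⟩, fun p => ?_⟩
    rw [blockOf_tailProd_succ r hc1 k hn, blockOf_succ, tailProd_congr r n c hkk',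
      ← cycProd_congr r hkkt, if_congr (hvg p) rfl rfl, hk'g]
    simp [v]

theorem stmt4_general (r a : ℕ) (ha : 1 ≤ a) (c : ℕ → ℕ)
    (hc : ∀ j, 1 ≤ j → j ≤ a → 1 ≤ c j) (hcsum : psum c a = r + 1) :
    Set.BijOn (fun k : ℕ → ℕ => cosetOf (WP r a c) (tailProd r a c k 2))
      {k : ℕ → ℕ |
        (∀ i, psum c 1 ≤ i → i ≤ r → 1 ≤ k i ∧ k i ≤ i + 1) ∧
        (∀ j, 2 ≤ j → j ≤ a → ∀ i, psum c (j - 1) ≤ i → i + 1 ≤ psum c j - 1 →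
          k i < k (i + 1)) ∧
        (∀ i, i < psum c 1 ∨ r < i → k i = 0)}
      {S | ∃ g, S = cosetOf (WP r a c) g} := by
  have hc1 : 1 ≤ psum c 1 := by simpa [psum] using hc 1 le_rfl ha
  have hr : r = psum c a - 1 := by omega
  refine ⟨fun k _ => ⟨_, rfl⟩, ?_, ?_⟩
  · rintro k ⟨hkb, hkm, hkz⟩ k' ⟨hk'b, hk'm, hk'z⟩ heq
    have hk : IsAdmissible c a k := ⟨hr ▸ hkb, hkm⟩
    have := hk.eqOn_of_blockOf_tailProd_eq ha hc1 hcsum.le ⟨hr ▸ hk'b, hk'm⟩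
      ((cosetOf_WP_eq_iff _ _).1 heq)
    funext i
    by_cases hi : psum c 1 ≤ i ∧ i ≤ r
    · exact this ⟨hi.1, hr ▸ hi.2⟩
    · rw [hkz i (by omega), hk'z i (by omega)]
  · rintro _ ⟨g, rfl⟩
    obtain ⟨k, hk, hkg⟩ := exists_isAdmissible_blockOf_tailProd_eq ha hc1 hcsum.le g
      fun p => by simp only [hcsum, Fin.is_lt]
    set k₀ := fun i => if psum c 1 ≤ i ∧ i ≤ r then k i else 0
    have hkk₀ : Set.EqOn k k₀ (Set.Icc (psum c 1) (psum c a - 1)) := fun i hi => by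
      simp only [k₀, if_pos (show psum c 1 ≤ i ∧ i ≤ r by have := hi.1; have := hi.2; omega)]
    obtain ⟨hb, hm⟩ := hk.congr hkk₀
    refine ⟨k₀, ⟨hr ▸ hb, hm, fun i hi => if_neg (by omega)⟩, ?_⟩
    show cosetOf _ _ = _
    rw [← tailProd_congr r a c hkk₀]
    exact (cosetOf_WP_eq_iff _ _).2 hkg

/-- the map `D_{(r_1 ⋯ r_a)} → W(P)\S_{r+1}`,
`(k_{x_1}, …, k_r) ↦ W(P) · (Π_2 ⋯ Π_a)`, is a bijection onto the set of left
cosets of `W(P)`.  (Tuples are encoded as functions `ℕ → ℕ` vanishing outside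
the index range `[x_1, r]`.) -/
theorem stmt4 (r a : ℕ) (hr : 1 ≤ r) (ha : 1 ≤ a) (c : ℕ → ℕ)
    (hc : ∀ j, 1 ≤ j → j ≤ a → 1 ≤ c j) (hcsum : psum c a = r + 1) :
    Set.BijOn (fun k : ℕ → ℕ => cosetOf (WP r a c) (tailProd r a c k 2))
      {k : ℕ → ℕ |
        (∀ i, psum c 1 ≤ i → i ≤ r → 1 ≤ k i ∧ k i ≤ i + 1) ∧
        (∀ j, 2 ≤ j → j ≤ a → ∀ i, psum c (j - 1) ≤ i → i + 1 ≤ psum c j - 1 →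
          k i < k (i + 1)) ∧
        (∀ i, i < psum c 1 ∨ r < i → k i = 0)}
      {S | ∃ g, S = cosetOf (WP r a c) g} :=
  stmt4_general r a ha c hc hcsum
end
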